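/- arXiv:0705.0915 — 4 statements merged into one kernel-verified Lean document; each statement's English description precedes it below -/
import Mathlib

section
/- There exists a finite Tantrix rotation puzzle configuration (the modified WIRE subpuzzle) with one designated boundary input edge and one designated boundary output edge such that for each input color c ∈ {blue, red}, the configuration with the input edge constrained to color c has exactly one solution, and in that solution the output edge shows color c. -/
/-! Shared definitions for the Tantrix rotation puzzle formalization. -/

/-- The four Tantrix colors, encoded as `Fin 4`. -/
def red : Fin 4 := 0
def yellow : Fin 4 := 1
def blue : Fin 4 := 2
def green : Fin 4 := 3

/-- A Tantrix tile assigns a color to each of the six edges of a hexagon such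
that exactly three colors occur, each on exactly two edges. -/
def IsTile (t : ZMod 6 → Fin 4) : Prop :=
  (Finset.univ.filter (fun c : Fin 4 => ∃ i, t i = c)).card = 3 ∧
  ∀ c : Fin 4, (∃ i, t i = c) →
    (Finset.univ.filter (fun i : ZMod 6 => t i = c)).card = 2

/-- Rotating a tile by `k ∈ ZMod 6`. -/
def rotTile (t : ZMod 6 → Fin 4) (k : ZMod 6) : ZMod 6 → Fin 4 :=
  fun i => t (i + k)

/-- The fixed enumeration of the six neighbor offsets in the hexagonal grid. -/
def offset (d : ZMod 6) : ℤ × ℤ :=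
  match d.val with
  | 0 => (0, 1)
  | 1 => (1, 1)
  | 2 => (1, 0)
  | 3 => (0, -1)
  | 4 => (-1, -1)
  | _ => (-1, 0)

/-- The neighbor of position `q` in direction `d`. -/
def addOffset (q : ℤ × ℤ) (d : ZMod 6) : ℤ × ℤ :=
  (q.1 + (offset d).1, q.2 + (offset d).2)

/-- A finite Tantrix rotation puzzle instance: a function from a finite shape
`S ⊆ ℤ × ℤ` to Tantrix tiles. -/
structure Puzzle where
  shape : Finset (ℤ × ℤ)
  tile : ℤ × ℤ → ZMod 6 → Fin 4
  tile_isTile : ∀ q ∈ shape, IsTile (tile q)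

/-- A solution of a rotation puzzle instance: a rotation for each tile such that
colors match at every joint edge of two adjacent tiles. -/
def Puzzle.Sol (A : Puzzle) (r : {q // q ∈ A.shape} → ZMod 6) : Prop :=
  ∀ (q : {q // q ∈ A.shape}) (d : ZMod 6) (h : addOffset q.val d ∈ A.shape),
    rotTile (A.tile q.val) (r q) d =
      rotTile (A.tile (addOffset q.val d)) (r ⟨addOffset q.val d, h⟩) (d + 3)

/-- `#TRP(A)`: the number of solutions of the rotation puzzle instance `A`. -/
noncomputable def Puzzle.numSolutions (A : Puzzle) : ℕ :=
  Nat.card {r : {q // q ∈ A.shape} → ZMod 6 // A.Sol r}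

/-- The color shown by the (rotated) tile at position `q` on its edge in
direction `d`, in the solution candidate `r`. -/
def edgeColor (A : Puzzle) (r : {q // q ∈ A.shape} → ZMod 6)
    (q : {q // q ∈ A.shape}) (d : ZMod 6) : Fin 4 :=
  rotTile (A.tile q.val) (r q) d

/-- Propositional formulas, built from variables by ¬, ∧, ∨. -/
inductive PropForm where
  | var : ℕ → PropForm
  | not : PropForm → PropForm
  | and : PropForm → PropForm → PropForm
  | or : PropForm → PropForm → PropForm

/-- The variables occurring in a formula. -/
def PropForm.vars : PropForm → Finset ℕ
  | .var v => {v}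
  | .not p => p.vars
  | .and p q => p.vars ∪ q.vars
  | .or p q => p.vars ∪ q.vars

/-- Evaluation of a formula under a (total) assignment. -/
def PropForm.eval (a : ℕ → Bool) : PropForm → Bool
  | .var v => a v
  | .not p => !(p.eval a)
  | .and p q => p.eval a && q.eval a
  | .or p q => p.eval a || q.eval a

/-- The size (number of symbols) of a formula. -/
def PropForm.size : PropForm → ℕ
  | .var _ => 1
  | .not p => p.size + 1
  | .and p q => p.size + q.size + 1
  | .or p q => p.size + q.size + 1

/-- A satisfying assignment of `φ` is a function from the variables of `φ`
to `Bool` making `φ` true. -/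
def PropForm.Sat (φ : PropForm) (a : {v // v ∈ φ.vars} → Bool) : Prop :=
  φ.eval (fun v => if h : v ∈ φ.vars then a ⟨v, h⟩ else false) = true

/-- `#SAT(φ)`: the number of satisfying assignments of `φ`. -/
noncomputable def PropForm.numSat (φ : PropForm) : ℕ :=
  Nat.card {a : {v // v ∈ φ.vars} → Bool // φ.Sat a}

/-- A gate instruction of a boolean circuit: `AND(j,k)`, `OR(j,k)`, or
`NOT(j)`, with 1-based gate indices `j`, `k`. -/
inductive Instr where
  | and : ℕ → ℕ → Instr
  | or : ℕ → ℕ → Instr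
  | not : ℕ → Instr
  deriving DecidableEq

/-- A boolean circuit over AND, OR, NOT with `numInputs` inputs: it is the
sequence `(α_1, …, α_m)` where `α_i = x_i` for `1 ≤ i ≤ numInputs` and the
remaining `α_i`, listed in `gates`, are gate instructions referring to earlier
gates (`j ≤ k < i`). Its size is `m = numInputs + gates.length`. -/
structure Circuit where
  numInputs : ℕ
  gates : List Instr
  wf : ∀ i (h : i < gates.length),
    match gates.get ⟨i, h⟩ with
    | .and j k => 1 ≤ j ∧ j ≤ k ∧ k ≤ numInputs + i
    | .or j k => 1 ≤ j ∧ j ≤ k ∧ k ≤ numInputs + i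
    | .not j => 1 ≤ j ∧ j ≤ numInputs + i

/-- The size `m` of a circuit. -/
def Circuit.size (C : Circuit) : ℕ := C.numInputs + C.gates.length

/-- The value computed by a gate instruction from the list `vs` of the values
of all earlier gates (`vs.getD (j-1) false` is the value of gate `j`). -/
def Instr.apply (vs : List Bool) : Instr → Bool
  | .and j k => (vs.getD (j - 1) false) && (vs.getD (k - 1) false)
  | .or j k => (vs.getD (j - 1) false) || (vs.getD (k - 1) false)
  | .not j => !(vs.getD (j - 1) false)

/-- The list of the values of all gates `α_1, …, α_m` of `C` under the input
assignment `a`, defined recursively in the standard way. -/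
def Circuit.values (C : Circuit) (a : Fin C.numInputs → Bool) : List Bool :=
  C.gates.foldl (fun vs g => vs ++ [g.apply vs]) (List.ofFn a)

/-- The value of the output gate `α_m` of `C` under the assignment `a`. -/
def Circuit.output (C : Circuit) (a : Fin C.numInputs → Bool) : Bool :=
  (C.values a).getD (C.size - 1) false

/-- `a` satisfies `C` if the output gate `α_m` evaluates to true. -/
def Circuit.Sat (C : Circuit) (a : Fin C.numInputs → Bool) : Prop :=
  C.output a = true

/-- The number of satisfying assignments of a circuit. -/
noncomputable def Circuit.numSat (C : Circuit) : ℕ :=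
  Nat.card {a : Fin C.numInputs → Bool // C.Sat a}

/-- A circuit over AND and NOT gates only (no OR gates). -/
def Circuit.NoOr (C : Circuit) : Prop :=
  ∀ g ∈ C.gates, ∀ j k, g ≠ Instr.or j k


instance (t : ZMod 6 → Fin 4) : Decidable (IsTile t) := by
  unfold IsTile; infer_instance

instance (A : Puzzle) (r : {q // q ∈ A.shape} → ZMod 6) : Decidable (A.Sol r) := by
  unfold Puzzle.Sol; exact Fintype.decidableForallFintype

/-- Tiles of the wire subpuzzle. -/
def wt1 : ZMod 6 → Fin 4 := ![0, 0, 3, 2, 2, 3]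
def wt2 : ZMod 6 → Fin 4 := ![2, 2, 0, 3, 3, 0]
def wt3 : ZMod 6 → Fin 4 := ![2, 1, 2, 0, 1, 0]

def wShape : Finset (ℤ × ℤ) := {(0, 0), (0, 1), (1, 1)}

def wTile : ℤ × ℤ → ZMod 6 → Fin 4 := fun q =>
  if q = (0, 1) then wt2 else if q = (1, 1) then wt3 else wt1

def wPuzzle : Puzzle where
  shape := wShape
  tile := wTile
  tile_isTile := by decide

set_option maxRecDepth 40000 in
/-- the modified WIRE subpuzzle: a configuration with a boundary
input edge and a boundary output edge such that for each input color
c ∈ {blue, red} the constrained configuration has exactly one solution, and in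
that solution the output edge shows c. -/
theorem wire_subpuzzle :
    ∃ (A : Puzzle) (qi qo : {q // q ∈ A.shape}) (di dout : ZMod 6),
      addOffset qi.val di ∉ A.shape ∧
      addOffset qo.val dout ∉ A.shape ∧
      (qi.val, di) ≠ (qo.val, dout) ∧
      ∀ c : Fin 4, (c = blue ∨ c = red) →
        ∃ r : {q // q ∈ A.shape} → ZMod 6,
          (A.Sol r ∧ edgeColor A r qi di = c) ∧
          edgeColor A r qo dout = c ∧
          (∀ r', A.Sol r' ∧ edgeColor A r' qi di = c → r' = r) := by
  refine ⟨wPuzzle, ⟨(0, 0), by decide⟩, ⟨(1, 1), by decide⟩, 3, 1,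
    by decide, by decide, by decide, ?_⟩
  rintro c (rfl | rfl)
  · exact ⟨fun q => if q.val = (0, 1) then 5 else if q.val = (1, 1) then 1 else 0,
      by decide, by decide, by decide⟩
  · exact ⟨fun q => if q.val = (0, 1) then 3 else if q.val = (1, 1) then 4 else 3,
      by decide, by decide, by decide⟩
end

section
/- There exists a finite Tantrix rotation puzzle configuration (the modified MOVE subpuzzle) with one designated boundary input edge and one designated boundary output edge located one hexagonal position to the right of the input, such that for each input color c ∈ {blue, red}, the configuration with the input edge constrained to color c has exactly one solution, and in that solution the output edge shows color c. -/
instance inst_s8 (A : Puzzle) (r : {q // q ∈ A.shape} → ZMod 6) : Decidable (A.Sol r) := by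
  unfold Puzzle.Sol; infer_instance

def mkTile (a b c d e f : Fin 4) : ZMod 6 → Fin 4 := fun i =>
  match i.val with
  | 0 => a | 1 => b | 2 => c | 3 => d | 4 => e | _ => f

def mvShape : Finset (ℤ × ℤ) := ⟨[((0:ℤ),(0:ℤ)), (1,0), (1,1)], by decide⟩

def mvTileFn : ℤ × ℤ → ZMod 6 → Fin 4 := fun q =>
  if q = (0,0) then mkTile 2 0 3 3 2 0
  else if q = (1,0) then mkTile 3 0 0 3 2 2
  else mkTile 2 1 3 3 2 1

def mvPuzzle : Puzzle where
  shape := mvShape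
  tile := mvTileFn
  tile_isTile := by decide

set_option maxRecDepth 100000 in
/-- the modified MOVE subpuzzle: a configuration with a boundary
input edge and a boundary output edge located one hexagonal position to the
right of the input, such that for each input color c ∈ {blue, red} the
constrained configuration has exactly one solution, and in that solution the
output edge shows c. -/
theorem move_subpuzzle :
    ∃ (A : Puzzle) (qi qo : {q // q ∈ A.shape}) (di dout : ZMod 6),
      addOffset qi.val di ∉ A.shape ∧
      addOffset qo.val dout ∉ A.shape ∧
      (qi.val, di) ≠ (qo.val, dout) ∧
      qo.val.1 = qi.val.1 + 1 ∧
      ∀ c : Fin 4, (c = blue ∨ c = red) →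
        ∃ r : {q // q ∈ A.shape} → ZMod 6,
          (A.Sol r ∧ edgeColor A r qi di = c) ∧
          edgeColor A r qo dout = c ∧
          (∀ r', A.Sol r' ∧ edgeColor A r' qi di = c → r' = r) := by
  refine ⟨mvPuzzle, ⟨(0,0), by decide⟩, ⟨(1,0), by decide⟩, 5, 2, by decide, by decide,
    by decide, by decide, ?_⟩
  rintro c (rfl | rfl)
  · exact ⟨fun q => if q.val = (0,0) then 5 else if q.val = (1,0) then 3 else 0, by decide⟩
  · exact ⟨fun q => if q.val = (0,0) then 2 else if q.val = (1,0) then 0 else 5, by decide⟩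
end

section
/- There exists a finite Tantrix rotation puzzle configuration (the modified NOT subpuzzle) with one designated boundary input edge and one designated boundary output edge, such that for each input color c ∈ {blue, red}, the configuration with the input edge constrained to color c has exactly one solution, and in that solution the output edge shows the opposite color (red if c is blue, and blue if c is red). -/
/-- Tile at position (0,0). -/
def tA : ZMod 6 → Fin 4 := fun i =>
  match i.val with
  | 0 => red | 1 => red | 2 => yellow | 3 => yellow | 4 => blue | _ => blue

/-- Tile at position (0,1). -/
def tB : ZMod 6 → Fin 4 := fun i =>
  match i.val with
  | 0 => red | 1 => red | 2 => blue | 3 => yellow | 4 => blue | _ => yellow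

/-- Tile at position (1,1). -/
def tC : ZMod 6 → Fin 4 := fun i =>
  match i.val with
  | 0 => red | 1 => blue | 2 => red | 3 => blue | 4 => yellow | _ => yellow

def notPuzzle : Puzzle where
  shape := {((0:ℤ), (0:ℤ)), ((0:ℤ), (1:ℤ)), ((1:ℤ), (1:ℤ))}
  tile := fun q => if q = ((0:ℤ), (1:ℤ)) then tB else if q = ((1:ℤ), (1:ℤ)) then tC else tA
  tile_isTile := by
    intro q hq
    fin_cases hq <;> unfold IsTile <;> decide


/-- The unique solution for input color blue. -/
def rBlue : {q // q ∈ notPuzzle.shape} → ZMod 6 := fun q =>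
  if q.val = ((0:ℤ), (0:ℤ)) then 1 else if q.val = ((0:ℤ), (1:ℤ)) then 4 else 1

/-- The unique solution for input color red. -/
def rRed : {q // q ∈ notPuzzle.shape} → ZMod 6 := fun q =>
  if q.val = ((0:ℤ), (0:ℤ)) then 1 else if q.val = ((0:ℤ), (1:ℤ)) then 3 else 0

/-- the modified NOT subpuzzle: a configuration with a boundary
input edge and a boundary output edge such that for each input color
c ∈ {blue, red} the constrained configuration has exactly one solution, and in
that solution the output edge shows the opposite color. -/

theorem not_subpuzzle :
    ∃ (A : Puzzle) (qi qo : {q // q ∈ A.shape}) (di dout : ZMod 6),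
      addOffset qi.val di ∉ A.shape ∧
      addOffset qo.val dout ∉ A.shape ∧
      (qi.val, di) ≠ (qo.val, dout) ∧
      ∀ c : Fin 4, (c = blue ∨ c = red) →
        ∃ r : {q // q ∈ A.shape} → ZMod 6,
          (A.Sol r ∧ edgeColor A r qi di = c) ∧
          (c = blue → edgeColor A r qo dout = red) ∧
          (c = red → edgeColor A r qo dout = blue) ∧
          (∀ r', A.Sol r' ∧ edgeColor A r' qi di = c → r' = r) := by
  refine ⟨notPuzzle, ⟨((0:ℤ), (1:ℤ)), by decide⟩, ⟨((1:ℤ), (1:ℤ)), by decide⟩, 4, 1,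
    by decide, by decide, by decide, ?_⟩
  intro c hc
  rcases hc with rfl | rfl
  · refine ⟨rBlue, ⟨?_, ?_⟩, ?_, ?_, ?_⟩
    · unfold Puzzle.Sol; decide
    · unfold edgeColor; decide
    · intro _; unfold edgeColor; decide
    · intro h; exact absurd h (by decide)
    · intro r' hr'
      revert hr'
      unfold Puzzle.Sol edgeColor
      revert r'
      set_option maxRecDepth 100000 in
      decide
  · refine ⟨rRed, ⟨?_, ?_⟩, ?_, ?_, ?_⟩
    · unfold Puzzle.Sol; decide
    · unfold edgeColor; decide
    · intro h; exact absurd h (by decide)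
    · intro _; unfold edgeColor; decide
    · intro r' hr'
      revert hr'
      unfold Puzzle.Sol edgeColor
      revert r'
      set_option maxRecDepth 100000 in
      decide
end

section
/- There exists a finite Tantrix rotation puzzle configuration (the modified AND subpuzzle) with two designated boundary input edges and one designated boundary output edge, such that for every pair of input colors (c₁, c₂) ∈ {blue, red} × {blue, red}, the configuration with the two input edges constrained to c₁ and c₂ has exactly one solution, and in that solution the output edge shows blue if c₁ = c₂ = blue and shows red otherwise (i.e., the gadget computes logical AND, with blue encoding true and red encoding false). -/
/-- Tile used at positions (0,0) and (0,1) of the AND gadget. -/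
def andT0 : ZMod 6 → Fin 4 := fun i => ![red, red, yellow, yellow, blue, blue] i

/-- Tile used at position (1,1) of the AND gadget. -/
def andT2 : ZMod 6 → Fin 4 := fun i => ![red, red, yellow, blue, yellow, blue] i

/-- The shape of the AND gadget: a triangle of three hexagons. -/
def andShape : Finset (ℤ × ℤ) := {(0,0), (0,1), (1,1)}

/-- The AND gadget puzzle. -/
def andPuzzle : Puzzle where
  shape := andShape
  tile := fun q => if q = (1,1) then andT2 else andT0
  tile_isTile := by
    intro q hq
    simp only [andShape, Finset.mem_insert, Finset.mem_singleton] at hq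
    rcases hq with h | h | h <;> subst h <;> unfold IsTile <;> decide

/-- The rotation assignment for given rotations of the three tiles. -/
def andRot (a b c : ZMod 6) : {q // q ∈ andPuzzle.shape} → ZMod 6 :=
  fun q => if q.val = (0,0) then a else if q.val = (0,1) then b else c

set_option maxRecDepth 100000 in
/-- the modified AND subpuzzle: a configuration with two boundary
input edges and one boundary output edge such that for each pair of input
colors (c₁, c₂) ∈ {blue, red}² the constrained configuration has exactly one
solution, and in that solution the output shows blue if c₁ = c₂ = blue and red
otherwise. -/
theorem and_subpuzzle :
    ∃ (A : Puzzle) (qi₁ qi₂ qo : {q // q ∈ A.shape}) (di₁ di₂ dout : ZMod 6),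
      addOffset qi₁.val di₁ ∉ A.shape ∧
      addOffset qi₂.val di₂ ∉ A.shape ∧
      addOffset qo.val dout ∉ A.shape ∧
      (qi₁.val, di₁) ≠ (qi₂.val, di₂) ∧
      (qi₁.val, di₁) ≠ (qo.val, dout) ∧
      (qi₂.val, di₂) ≠ (qo.val, dout) ∧
      ∀ c₁ c₂ : Fin 4, (c₁ = blue ∨ c₁ = red) → (c₂ = blue ∨ c₂ = red) →
        ∃ r : {q // q ∈ A.shape} → ZMod 6,
          (A.Sol r ∧ edgeColor A r qi₁ di₁ = c₁ ∧ edgeColor A r qi₂ di₂ = c₂) ∧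
          (c₁ = blue ∧ c₂ = blue → edgeColor A r qo dout = blue) ∧
          (¬(c₁ = blue ∧ c₂ = blue) → edgeColor A r qo dout = red) ∧
          (∀ r', A.Sol r' ∧ edgeColor A r' qi₁ di₁ = c₁ ∧
              edgeColor A r' qi₂ di₂ = c₂ → r' = r) := by

  refine ⟨andPuzzle, ⟨(0,0), by decide⟩, ⟨(1,1), by decide⟩, ⟨(0,1), by decide⟩,
    2, 2, 0, by decide, by decide, by decide, by decide, by decide, by decide, ?_⟩
  intro c₁ c₂ h₁ h₂
  rcases h₁ with h₁ | h₁ <;> rcases h₂ with h₂ | h₂ <;> subst h₁ <;> subst h₂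
  · exact ⟨andRot 3 5 1, by unfold Puzzle.Sol edgeColor; decide, by decide, by decide, by unfold Puzzle.Sol edgeColor; decide⟩
  · exact ⟨andRot 3 0 5, by unfold Puzzle.Sol edgeColor; decide, by decide, by decide, by unfold Puzzle.Sol edgeColor; decide⟩
  · exact ⟨andRot 5 1 3, by unfold Puzzle.Sol edgeColor; decide, by decide, by decide, by unfold Puzzle.Sol edgeColor; decide⟩
  · exact ⟨andRot 4 1 5, by unfold Puzzle.Sol edgeColor; decide, by decide, by decide, by unfold Puzzle.Sol edgeColor; decide⟩
end
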